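/- arXiv:0803.0479 — 2 statements merged into one kernel-verified Lean document; each statement's English description precedes it below -/
import Mathlib

section
/- Fix d ≥ 2 and real parameters a, b, and let Λ_{a,b} be the generalized Werner-Holevo map on M_d(ℂ) defined by Λ_{a,b}(ρ) = a ρ + b ρᵀ + (1−a−b) (tr ρ) 1/d. Then Λ_{a,b} is completely positive (equivalently, its Choi matrix ∑_{i,j} E_{ij} ⊗ Λ_{a,b}(E_{ij}) is positive semidefinite) if and only if a(d²−1) + b(d−1) + 1 ≥ 0, b(d−1) − a + 1 ≥ 0, and b(d+1) + a − 1 ≤ 0. -/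
open scoped Kronecker ComplexOrder
open Matrix

noncomputable section

/-- Apply the completely positive map determined by the Kraus operators `v`:
`ρ ↦ ∑ α, v α * ρ * (v α)ᴴ`. -/
def krausApply {K d : Type*} [Fintype K] [Fintype d] (v : K → Matrix d d ℂ)
    (ρ : Matrix d d ℂ) : Matrix d d ℂ :=
  ∑ α, v α * ρ * (v α)ᴴ

/-- The Kraus operators determine a (trace-preserving) quantum channel:
`∑ α, (v α)* (v α) = 1`. -/
def IsKraus {K d : Type*} [Fintype K] [Fintype d] [DecidableEq d]
    (v : K → Matrix d d ℂ) : Prop :=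
  ∑ α, (v α)ᴴ * v α = 1

/-- A density matrix: positive semidefinite with trace one. -/
def IsDensity {d : Type*} [Fintype d] (ρ : Matrix d d ℂ) : Prop :=
  ρ.PosSemidef ∧ ρ.trace = 1

/-- The purity `tr ρ²` of a matrix, as a real number. -/
def purity {d : Type*} [Fintype d] (ρ : Matrix d d ℂ) : ℝ :=
  ((ρ * ρ).trace).re

/-- The Choi matrix of the map `ρ ↦ Λ(ρᵀ)`, namely `∑ i j, E_ij ⊗ Λ(E_ji)`. -/
def choiT {K d : Type*} [Fintype K] [Fintype d] [DecidableEq d]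
    (v : K → Matrix d d ℂ) : Matrix (d × d) (d × d) ℂ :=
  ∑ i, ∑ j, Matrix.single i j (1 : ℂ) ⊗ₖ krausApply v (Matrix.single j i (1 : ℂ))

/-- The flip operator `F` on `ℂ^d ⊗ ℂ^d`, with entries `F_{(i,j),(k,l)} = δ_{il} δ_{jk}`. -/
def flipOp (d : Type*) [DecidableEq d] : Matrix (d × d) (d × d) ℂ :=
  Matrix.of fun p q => if p.1 = q.2 ∧ p.2 = q.1 then 1 else 0


/-- The generalized Werner-Holevo map `Λ_{a,b}(ρ) = a ρ + b ρᵀ + (1−a−b)(tr ρ) 1/d`. -/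
def WHmap (d : ℕ) (a b : ℝ) (ρ : Matrix (Fin d) (Fin d) ℂ) : Matrix (Fin d) (Fin d) ℂ :=
  (a : ℂ) • ρ + (b : ℂ) • ρᵀ
    + ((((1 - a - b : ℝ) : ℂ) * ρ.trace) / (d : ℂ)) • (1 : Matrix (Fin d) (Fin d) ℂ)

/-- The Choi matrix `∑ i j, E_ij ⊗ Λ_{a,b}(E_ij)` of the generalized Werner-Holevo map. -/
def WHchoi (d : ℕ) (a b : ℝ) : Matrix (Fin d × Fin d) (Fin d × Fin d) ℂ :=
  ∑ i, ∑ j, Matrix.single i j (1 : ℂ) ⊗ₖ WHmap d a b (Matrix.single i j (1 : ℂ))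


/-! ### Auxiliary material for the proof -/

/-- The (unnormalized) projector onto the maximally entangled state,
`M_{(i,k),(j,l)} = δ_{ik} δ_{jl}`. -/
def Mmat (d : ℕ) : Matrix (Fin d × Fin d) (Fin d × Fin d) ℂ :=
  Matrix.of fun p q => if p.1 = p.2 ∧ q.1 = q.2 then 1 else 0

lemma Mmat_herm (d : ℕ) : (Mmat d)ᴴ = Mmat d := by
  ext p q
  simp only [conjTranspose_apply, Mmat, of_apply, apply_ite (star : ℂ → ℂ),
    star_one, star_zero, and_comm]

lemma flip_herm (d : ℕ) : (flipOp (Fin d))ᴴ = flipOp (Fin d) := by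
  ext p q
  simp only [conjTranspose_apply, flipOp, of_apply, apply_ite (star : ℂ → ℂ),
    star_one, star_zero]
  congr 1
  simp only [eq_iff_iff]
  constructor <;> rintro ⟨h1, h2⟩ <;> exact ⟨h2.symm, h1.symm⟩

lemma Mmat_mul_Mmat (d : ℕ) : Mmat d * Mmat d = (d : ℂ) • Mmat d := by
  ext ⟨i, k⟩ ⟨j, l⟩
  simp only [mul_apply, Mmat, of_apply, Matrix.smul_apply, smul_eq_mul, Fintype.sum_prod_type]
  rcases eq_or_ne i k with h | h <;> rcases eq_or_ne j l with h2 | h2 <;>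
    simp [h, h2, ite_and, Finset.sum_ite_eq, Finset.sum_ite_eq', Finset.card_univ]

lemma flip_mul_flip (d : ℕ) : flipOp (Fin d) * flipOp (Fin d) = 1 := by
  ext ⟨i, k⟩ ⟨j, l⟩
  simp only [mul_apply, flipOp, of_apply, one_apply, Fintype.sum_prod_type, Prod.mk.injEq]
  rcases eq_or_ne i j with h | h <;> rcases eq_or_ne k l with h2 | h2 <;>
    simp [h, h2, ite_and, Finset.sum_ite_eq, Finset.sum_ite_eq', eq_comm]

lemma flip_mul_Mmat (d : ℕ) : flipOp (Fin d) * Mmat d = Mmat d := by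
  ext ⟨i, k⟩ ⟨j, l⟩
  simp only [mul_apply, flipOp, Mmat, of_apply, Fintype.sum_prod_type]
  rcases eq_or_ne i k with h | h <;> rcases eq_or_ne j l with h2 | h2 <;>
    simp [h, h2, ite_and, Finset.sum_ite_eq, Finset.sum_ite_eq', eq_comm]

lemma Mmat_mul_flip (d : ℕ) : Mmat d * flipOp (Fin d) = Mmat d := by
  ext ⟨i, k⟩ ⟨j, l⟩
  simp only [mul_apply, flipOp, Mmat, of_apply, Fintype.sum_prod_type]
  rcases eq_or_ne i k with h | h <;> rcases eq_or_ne j l with h2 | h2 <;>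
    simp [h, h2, ite_and, Finset.sum_ite_eq, Finset.sum_ite_eq', eq_comm]

lemma psd_of_proj {n : Type*} [Fintype n] [DecidableEq n] {Q : Matrix n n ℂ}
    (h1 : Qᴴ = Q) (h2 : Q * Q = Q) : Q.PosSemidef := by
  have h3 : Q = Qᴴ * Q := by rw [h1, h2]
  rw [h3]
  exact posSemidef_conjTranspose_mul_self Q

lemma psd_smul' {n : Type*} [Fintype n] {Q : Matrix n n ℂ} (h : Q.PosSemidef) {r : ℝ}
    (hr : 0 ≤ r) : ((r : ℂ) • Q).PosSemidef := by
  rw [posSemidef_iff_dotProduct_mulVec]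
  constructor
  · have h1 := h.1
    unfold IsHermitian at h1 ⊢
    rw [conjTranspose_smul, h1, Complex.star_def, Complex.conj_ofReal]
  · intro x
    rw [smul_mulVec, dotProduct_smul, smul_eq_mul]
    exact mul_nonneg (by exact_mod_cast hr) (h.dotProduct_mulVec_nonneg x)

lemma quad_two {n : Type*} [Fintype n] [DecidableEq n] (A : Matrix n n ℂ) (p₀ p₁ : n)
    (c : ℝ) :
    star (fun q => (if q = p₀ then (1:ℂ) else 0) + (c:ℂ) * (if q = p₁ then 1 else 0)) ⬝ᵥ
      (A *ᵥ fun q => (if q = p₀ then (1:ℂ) else 0) + (c:ℂ) * (if q = p₁ then 1 else 0))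
    = A p₀ p₀ + c * A p₀ p₁ + c * A p₁ p₀ + c^2 * A p₁ p₁ := by
  simp only [dotProduct, mulVec, Pi.star_apply, star_add, star_mul', Complex.star_def,
    apply_ite (starRingEnd ℂ), _root_.map_one, _root_.map_zero, Complex.conj_ofReal,
    mul_add, add_mul, mul_ite, ite_mul,
    mul_zero, zero_mul, mul_one, one_mul, Finset.sum_add_distrib, Finset.sum_ite_eq',
    Finset.mem_univ, if_true]
  ring

lemma quad_diag {d : ℕ} (A : Matrix (Fin d × Fin d) (Fin d × Fin d) ℂ) :
    star (fun p : Fin d × Fin d => if p.1 = p.2 then (1:ℂ) else 0) ⬝ᵥ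
      (A *ᵥ fun p : Fin d × Fin d => if p.1 = p.2 then (1:ℂ) else 0)
    = ∑ i, ∑ j, A (i, i) (j, j) := by
  simp only [dotProduct, mulVec, Pi.star_apply, Complex.star_def,
    apply_ite (starRingEnd ℂ), _root_.map_one,
    _root_.map_zero, mul_ite, ite_mul, mul_zero, zero_mul, mul_one, one_mul,
    Fintype.sum_prod_type, Finset.sum_ite_eq, Finset.mem_univ, if_true]

lemma WHchoi_apply (d : ℕ) (a b : ℝ) (p q : Fin d × Fin d) :
    WHchoi d a b p q =
      (a : ℂ) * (if p.1 = p.2 ∧ q.1 = q.2 then 1 else 0)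
      + (b : ℂ) * (if p.1 = q.2 ∧ p.2 = q.1 then 1 else 0)
      + ((1 - a - b : ℝ) : ℂ) / (d : ℂ) * (if p.1 = q.1 ∧ p.2 = q.2 then 1 else 0) := by
  obtain ⟨i, k⟩ := p
  obtain ⟨j, l⟩ := q
  simp only [WHchoi, WHmap, Matrix.sum_apply, kroneckerMap_apply, Matrix.single,
    Matrix.add_apply, Matrix.smul_apply, Matrix.transpose_apply, Matrix.one_apply,
    Matrix.trace, Matrix.diag, of_apply, smul_eq_mul]
  rw [Finset.sum_eq_single i, Finset.sum_eq_single j] <;>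
    simp +contextual [eq_comm, Finset.sum_ite_eq]
  have hc : (Finset.filter (fun x => i = x ∧ j = x) (Finset.univ : Finset (Fin d))).card
      = if i = j then 1 else 0 := by
    split_ifs with h
    · subst h
      have : Finset.filter (fun x => i = x ∧ i = x) (Finset.univ : Finset (Fin d)) = {i} := by
        ext x; simp [eq_comm]
      rw [this]
      simp
    · rw [Finset.card_eq_zero, Finset.filter_eq_empty_iff]
      rintro x - ⟨rfl, rfl⟩
      exact h rfl
  rw [hc]
  rcases eq_or_ne i j with h | h <;> rcases eq_or_ne k l with h2 | h2 <;> simp_all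

lemma WHchoi_decomp (d : ℕ) (hd : 0 < d) (a b : ℝ) :
    WHchoi d a b =
      (((a*(d^2-1)+b*(d-1)+1)/d : ℝ) : ℂ) • ((d:ℂ)⁻¹ • Mmat d)
      + (((b*(d-1)-a+1)/d : ℝ) : ℂ) •
          ((2:ℂ)⁻¹ • (1 + flipOp (Fin d)) - (d:ℂ)⁻¹ • Mmat d)
      + (((1-a-b*(d+1))/d : ℝ) : ℂ) • ((2:ℂ)⁻¹ • (1 - flipOp (Fin d))) := by
  have hd0 : (d : ℂ) ≠ 0 := Nat.cast_ne_zero.mpr hd.ne'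
  ext p q
  simp only [WHchoi_apply, Mmat, flipOp, Matrix.add_apply, Matrix.sub_apply,
    Matrix.smul_apply, Matrix.one_apply, of_apply, smul_eq_mul, Prod.ext_iff]
  push_cast
  split_ifs <;> field_simp <;> ring

theorem WH_choi_psd_of (d : ℕ) (hd : 0 < d) (a b : ℝ)
    (h1 : 0 ≤ a * ((d : ℝ) ^ 2 - 1) + b * ((d : ℝ) - 1) + 1)
    (h2 : 0 ≤ b * ((d : ℝ) - 1) - a + 1)
    (h3 : b * ((d : ℝ) + 1) + a - 1 ≤ 0) : (WHchoi d a b).PosSemidef := by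
  have hd0 : (d : ℂ) ≠ 0 := Nat.cast_ne_zero.mpr hd.ne'
  have hdR : (0:ℝ) < d := by exact_mod_cast hd
  set F := flipOp (Fin d) with hF
  set P := (d:ℂ)⁻¹ • Mmat d with hP
  have hPh : Pᴴ = P := by
    rw [hP, conjTranspose_smul, Mmat_herm]
    congr 1
    simp [Complex.star_def, map_inv₀]
  have hFh : Fᴴ = F := flip_herm d
  have hFF : F * F = 1 := by rw [hF]; exact flip_mul_flip d
  have hPP : P * P = P := by
    rw [hP, smul_mul_smul_comm, Mmat_mul_Mmat, smul_smul, mul_assoc,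
      inv_mul_cancel₀ hd0, mul_one]
  have hFP : F * P = P := by
    rw [hP, mul_smul_comm, hF, flip_mul_Mmat]
  have hPF : P * F = P := by
    rw [hP, smul_mul_assoc, hF, Mmat_mul_flip]
  have hP1 : P.PosSemidef := psd_of_proj hPh hPP
  have hP3 : ((2:ℂ)⁻¹ • (1 - F)).PosSemidef := by
    refine psd_of_proj ?_ ?_
    · rw [conjTranspose_smul, conjTranspose_sub, conjTranspose_one, hFh]
      congr 1
      simp [Complex.star_def, map_inv₀]
    · have key : (1 - F) * (1 - F) = (2:ℂ) • (1 - F) := by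
        simp only [mul_sub, sub_mul, one_mul, mul_one, hFF]
        module
      rw [smul_mul_smul_comm, key, smul_smul]
      norm_num
  have hP2 : ((2:ℂ)⁻¹ • (1 + F) - P).PosSemidef := by
    refine psd_of_proj ?_ ?_
    · rw [conjTranspose_sub, conjTranspose_smul, conjTranspose_add,
        conjTranspose_one, hFh, hPh]
      congr 1
      simp [Complex.star_def, map_inv₀]
    · have hSS : ((2:ℂ)⁻¹ • (1 + F)) * ((2:ℂ)⁻¹ • (1 + F)) = (2:ℂ)⁻¹ • (1 + F) := by
        have key : (1 + F) * (1 + F) = (2:ℂ) • (1 + F) := by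
          simp only [mul_add, add_mul, one_mul, mul_one, hFF]
          module
        rw [smul_mul_smul_comm, key, smul_smul]
        norm_num
      have hSP : ((2:ℂ)⁻¹ • (1 + F)) * P = P := by
        rw [smul_mul_assoc, add_mul, one_mul, hFP]
        module
      have hPS : P * ((2:ℂ)⁻¹ • (1 + F)) = P := by
        rw [mul_smul_comm, mul_add, mul_one, hPF]
        module
      rw [sub_mul, mul_sub, mul_sub, hSS, hSP, hPS, hPP]
      abel
  have he1 : 0 ≤ (a*((d:ℝ)^2-1)+b*((d:ℝ)-1)+1)/d := div_nonneg h1 hdR.le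
  have he2 : 0 ≤ (b*((d:ℝ)-1)-a+1)/d := div_nonneg h2 hdR.le
  have he3 : 0 ≤ (1-a-b*((d:ℝ)+1))/d := div_nonneg (by linarith) hdR.le
  rw [WHchoi_decomp d hd a b]
  exact ((psd_smul' hP1 he1).add (psd_smul' hP2 he2)).add (psd_smul' hP3 he3)


/-- For `d ≥ 2`, the generalized Werner-Holevo map `Λ_{a,b}` is completely
positive (its Choi matrix is positive semidefinite) iff
`a(d²−1) + b(d−1) + 1 ≥ 0`, `b(d−1) − a + 1 ≥ 0` and `b(d+1) + a − 1 ≤ 0`. -/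
theorem WH_completelyPositive_iff {d : ℕ} (hd : 2 ≤ d) (a b : ℝ) :
    (WHchoi d a b).PosSemidef ↔
      (0 ≤ a * ((d : ℝ) ^ 2 - 1) + b * ((d : ℝ) - 1) + 1
        ∧ 0 ≤ b * ((d : ℝ) - 1) - a + 1
        ∧ b * ((d : ℝ) + 1) + a - 1 ≤ 0) := by
  have hdpos : 0 < d := by omega
  have hd0 : (d : ℂ) ≠ 0 := Nat.cast_ne_zero.mpr hdpos.ne'
  have hdR : (2:ℝ) ≤ (d:ℝ) := by exact_mod_cast hd
  constructor
  · intro h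
    -- first inequality: maximally entangled vector
    have hx1 := h.dotProduct_mulVec_nonneg (fun p : Fin d × Fin d => if p.1 = p.2 then 1 else 0)
    rw [quad_diag] at hx1
    have hsum : ∑ i, ∑ j, WHchoi d a b (i, i) (j, j)
        = ((a * (d:ℝ)^2 + b * (d:ℝ) + (1 - a - b) : ℝ) : ℂ) := by
      simp only [WHchoi_apply, and_self, if_true]
      simp [Finset.sum_add_distrib, Finset.sum_ite_eq, mul_ite, mul_one, mul_zero,
        Finset.card_univ, Finset.mul_sum]
      field_simp
    rw [hsum] at hx1
    have c1 : (0:ℝ) ≤ a * (d:ℝ)^2 + b * (d:ℝ) + (1 - a - b) := by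
      exact_mod_cast hx1
    -- two off-diagonal vectors
    set i0 : Fin d := ⟨0, by omega⟩ with hi0
    set i1 : Fin d := ⟨1, by omega⟩ with hi1
    have hne : i0 ≠ i1 := by simp [hi0, hi1, Fin.ext_iff]
    have hentry : WHchoi d a b (i0, i1) (i0, i1) = ((1 - a - b : ℝ) : ℂ) / (d : ℂ) := by
      simp [WHchoi_apply, hne, hne.symm]
    have hentry2 : WHchoi d a b (i0, i1) (i1, i0) = (b : ℂ) := by
      simp [WHchoi_apply, hne, hne.symm]
    have hentry3 : WHchoi d a b (i1, i0) (i0, i1) = (b : ℂ) := by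
      simp [WHchoi_apply, hne, hne.symm]
    have hentry4 : WHchoi d a b (i1, i0) (i1, i0) = ((1 - a - b : ℝ) : ℂ) / (d : ℂ) := by
      simp [WHchoi_apply, hne, hne.symm]
    have key : ∀ c : ℝ, (0:ℝ) ≤ (1 + c^2) * ((1 - a - b) / d) + 2 * c * b := by
      intro c
      have hx2 := h.dotProduct_mulVec_nonneg (fun q : Fin d × Fin d =>
        (if q = (i0, i1) then (1:ℂ) else 0) + (c:ℂ) * (if q = (i1, i0) then 1 else 0))
      rw [quad_two] at hx2
      rw [hentry, hentry2, hentry3, hentry4] at hx2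
      have : ((( (1 + c^2) * ((1 - a - b) / d) + 2 * c * b : ℝ)) : ℂ)
          = ((1 - a - b : ℝ) : ℂ) / (d : ℂ) + (c:ℂ) * (b:ℂ) + (c:ℂ) * (b:ℂ)
            + (c:ℂ)^2 * (((1 - a - b : ℝ) : ℂ) / (d : ℂ)) := by
        push_cast
        ring
      rw [← this] at hx2
      exact_mod_cast hx2
    have c2 := key 1
    have c3 := key (-1)
    have hdpos' : (0:ℝ) < (d:ℝ) := by linarith
    refine ⟨by nlinarith, ?_, ?_⟩
    · have : (0:ℝ) ≤ 2 * ((1 - a - b) / d) + 2 * b := by linarith [c2]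
      have h4 : (0:ℝ) ≤ 2 * (1 - a - b) + 2 * b * d := by
        have := mul_le_mul_of_nonneg_left this hdpos'.le
        field_simp at this
        linarith [this]
      nlinarith
    · have : (0:ℝ) ≤ 2 * ((1 - a - b) / d) - 2 * b := by linarith [c3]
      have h4 : (0:ℝ) ≤ 2 * (1 - a - b) - 2 * b * d := by
        have := mul_le_mul_of_nonneg_left this hdpos'.le
        field_simp at this
        linarith [this]
      nlinarith
  · rintro ⟨h1, h2, h3⟩
    exact WH_choi_psd_of d hdpos a b h1 h2 h3
end
end

section
/- Fix d ≥ 2 and real a, b with ab ≤ 0, and suppose the generalized Werner-Holevo map Λ_{a,b}(ρ) = a ρ + b ρᵀ + (1−a−b)(tr ρ) 1/d on M_d(ℂ) is completely positive. Then the maximal purity output of Λ_{a,b} equals (d(a²+b²) − (a+b)² + 1)/d, i.e. sup over density matrices ρ of tr((Λ_{a,b}(ρ))²) = (d(a²+b²) − (a+b)² + 1)/d; equivalently, the minimal Renyi-2 entropy output is −log((d(a²+b²) − (a+b)² + 1)/d). -/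
open scoped Kronecker ComplexOrder
open Matrix

noncomputable section

namespace WHaux

lemma trace_eq_sum_eig {n : Type*} [Fintype n] [DecidableEq n] {A : Matrix n n ℂ}
    (hA : A.IsHermitian) : A.trace = ∑ i, (hA.eigenvalues i : ℂ) := by
  conv_lhs => rw [hA.spectral_theorem, Unitary.conjStarAlgAut_apply]
  rw [trace_mul_cycle]
  rw [(Matrix.mem_unitaryGroup_iff').mp (hA.eigenvectorUnitary).2]
  simp [trace_diagonal]

lemma trace_sq_eq_sum_eig {n : Type*} [Fintype n] [DecidableEq n] {A : Matrix n n ℂ}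
    (hA : A.IsHermitian) : (A * A).trace = ∑ i, (hA.eigenvalues i : ℂ) ^ 2 := by
  have h2 : star (hA.eigenvectorUnitary : Matrix n n ℂ) * (hA.eigenvectorUnitary : Matrix n n ℂ)
      = 1 := (Matrix.mem_unitaryGroup_iff').mp (hA.eigenvectorUnitary).2
  conv_lhs => rw [hA.spectral_theorem, Unitary.conjStarAlgAut_apply]
  rw [show ((hA.eigenvectorUnitary : Matrix n n ℂ) * diagonal (RCLike.ofReal ∘ hA.eigenvalues)
      * star (hA.eigenvectorUnitary : Matrix n n ℂ))
      * ((hA.eigenvectorUnitary : Matrix n n ℂ) * diagonal (RCLike.ofReal ∘ hA.eigenvalues)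
      * star (hA.eigenvectorUnitary : Matrix n n ℂ))
      = (hA.eigenvectorUnitary : Matrix n n ℂ)
        * (diagonal (RCLike.ofReal ∘ hA.eigenvalues) * diagonal (RCLike.ofReal ∘ hA.eigenvalues))
        * star (hA.eigenvectorUnitary : Matrix n n ℂ) by
    simp only [Matrix.mul_assoc]
    rw [← Matrix.mul_assoc (star _) _, h2, Matrix.one_mul]]
  rw [trace_mul_cycle, ← Matrix.mul_assoc, h2, Matrix.one_mul]
  simp [trace_diagonal, diagonal_mul_diagonal, sq]

lemma psd_diag_re_nonneg {n : Type*} [Fintype n] [DecidableEq n] {M : Matrix n n ℂ}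
    (hM : M.PosSemidef) (i : n) : 0 ≤ (M i i).re := by
  have h := hM.dotProduct_mulVec_nonneg (Pi.single i 1)
  have : star (Pi.single i 1 : n → ℂ) ⬝ᵥ M.mulVec (Pi.single i 1) = M i i := by
    simp [dotProduct, Pi.single_apply, mulVec, Finset.mul_sum, apply_ite]
  rw [this] at h
  exact (Complex.le_def.mp h).1

lemma psd_trace_re_nonneg {n : Type*} [Fintype n] [DecidableEq n] {M : Matrix n n ℂ}
    (hM : M.PosSemidef) : 0 ≤ (M.trace).re := by
  rw [Matrix.trace, Complex.re_sum]
  exact Finset.sum_nonneg fun i _ => psd_diag_re_nonneg hM i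

open scoped MatrixOrder in
lemma trace_mul_psd_re_nonneg {n : Type*} [Fintype n] [DecidableEq n]
    {A B : Matrix n n ℂ} (hA : A.PosSemidef) (hB : B.PosSemidef) :
    0 ≤ ((A * B).trace).re := by
  obtain ⟨C, rfl⟩ := CStarAlgebra.nonneg_iff_eq_star_mul_self.mp hB.nonneg
  rw [← Matrix.mul_assoc, Matrix.trace_mul_cycle]
  exact psd_trace_re_nonneg (hA.mul_mul_conjTranspose_same C)

lemma density_trace_sq_le_one {n : Type*} [Fintype n] [DecidableEq n] {ρ : Matrix n n ℂ}
    (hρ : ρ.PosSemidef) (ht : ρ.trace = 1) : ((ρ * ρ).trace).re ≤ 1 := by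
  have hsum : ∑ i, hρ.1.eigenvalues i = 1 := by
    have := trace_eq_sum_eig hρ.1
    rw [ht] at this
    exact_mod_cast (by exact_mod_cast this.symm : ((∑ i, hρ.1.eigenvalues i : ℝ) : ℂ) = 1)
  have hnn := hρ.eigenvalues_nonneg
  have hle : ∀ i, hρ.1.eigenvalues i ≤ 1 := fun i => by
    calc hρ.1.eigenvalues i ≤ ∑ j, hρ.1.eigenvalues j :=
      Finset.single_le_sum (fun j _ => hnn j) (Finset.mem_univ i)
    _ = 1 := hsum
  have : ((ρ * ρ).trace).re = ∑ i, hρ.1.eigenvalues i ^ 2 := by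
    rw [trace_sq_eq_sum_eig hρ.1, Complex.re_sum]
    simp [← Complex.ofReal_pow]
  rw [this, ← hsum]
  exact Finset.sum_le_sum fun i _ => by nlinarith [hnn i, hle i]

lemma trace_sq_pos {n : Type*} [Fintype n] [DecidableEq n] {A : Matrix n n ℂ}
    (hA : A.IsHermitian) (ht : A.trace = 1) : 0 < ((A * A).trace).re := by
  have hre : ((A * A).trace).re = ∑ i, hA.eigenvalues i ^ 2 := by
    rw [trace_sq_eq_sum_eig hA, Complex.re_sum]
    simp [← Complex.ofReal_pow]
  have hsum : ∑ i, hA.eigenvalues i = 1 := by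
    have := trace_eq_sum_eig hA
    rw [ht] at this
    exact_mod_cast (by exact_mod_cast this.symm : ((∑ i, hA.eigenvalues i : ℝ) : ℂ) = 1)
  rw [hre]
  by_contra hc
  push_neg at hc
  have hz : ∑ i, hA.eigenvalues i ^ 2 = 0 :=
    le_antisymm hc (Finset.sum_nonneg fun i _ => sq_nonneg _)
  have h0 := (Finset.sum_eq_zero_iff_of_nonneg (fun i _ => sq_nonneg _)).mp hz
  have : ∑ i, hA.eigenvalues i = 0 := Finset.sum_eq_zero fun i hi =>
    pow_eq_zero_iff (n := 2) (by norm_num) |>.mp (h0 i hi)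
  rw [this] at hsum
  norm_num at hsum

lemma WH_trace_eq {d : ℕ} (hd : 0 < d) (a b : ℝ) {ρ : Matrix (Fin d) (Fin d) ℂ}
    (ht : ρ.trace = 1) : (WHmap d a b ρ).trace = 1 := by
  have hdne : (d : ℂ) ≠ 0 := Nat.cast_ne_zero.mpr hd.ne'
  simp only [WHmap, trace_add, trace_smul, trace_transpose, ht, trace_one, Fintype.card_fin, smul_eq_mul, mul_one]
  field_simp
  push_cast
  ring

lemma WH_herm {d : ℕ} (a b : ℝ) {ρ : Matrix (Fin d) (Fin d) ℂ}
    (hρ : ρ.PosSemidef) : (WHmap d a b ρ).IsHermitian := by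
  have h1 : ρᴴ = ρ := hρ.1
  have h2 : (ρᵀ)ᴴ = ρᵀ := hρ.transpose.1
  have h3 : ρ.trace = (starRingEnd ℂ) ρ.trace := by
    conv_lhs => rw [← h1]
    simp [trace_conjTranspose]
  simp [WHmap, IsHermitian, conjTranspose_add, conjTranspose_smul, h1, h2,
    Complex.conj_ofReal, map_div₀, ← h3]

lemma WH_purity {d : ℕ} (hd : 0 < d) (a b : ℝ) {ρ : Matrix (Fin d) (Fin d) ℂ}
    (ht : ρ.trace = 1) :
    purity (WHmap d a b ρ) = (a ^ 2 + b ^ 2) * ((ρ * ρ).trace).re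
      + 2 * a * b * ((ρ * ρᵀ).trace).re + (1 - (a + b) ^ 2) / d := by
  have hdne : (d : ℂ) ≠ 0 := Nat.cast_ne_zero.mpr hd.ne'
  have e1 : (ρᵀ * ρᵀ).trace = (ρ * ρ).trace := by rw [← transpose_mul, trace_transpose]
  have e2 : (ρᵀ * ρ).trace = (ρ * ρᵀ).trace := trace_mul_comm _ _
  have e3 : (ρᵀ).trace = 1 := by rw [trace_transpose, ht]
  have key : ((WHmap d a b ρ) * (WHmap d a b ρ)).trace
      = ((a ^ 2 + b ^ 2 : ℝ) : ℂ) * (ρ * ρ).trace + ((2 * a * b : ℝ) : ℂ) * (ρ * ρᵀ).trace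
        + (((1 - (a + b) ^ 2) / d : ℝ) : ℂ) := by
    unfold WHmap
    rw [ht, mul_one]
    simp only [add_mul, mul_add, smul_mul_assoc, mul_smul_comm, trace_add, trace_smul,
      smul_eq_mul, Matrix.mul_one, Matrix.one_mul, trace_one, Fintype.card_fin, e1, e2, e3, ht]
    push_cast
    field_simp
    ring
  rw [purity, key, Complex.add_re, Complex.add_re, Complex.re_ofReal_mul, Complex.re_ofReal_mul,
    Complex.ofReal_re]

def wi0 {d : ℕ} (hd : 2 ≤ d) : Fin d := ⟨0, by omega⟩
def wi1 {d : ℕ} (hd : 2 ≤ d) : Fin d := ⟨1, by omega⟩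

def wv {d : ℕ} (hd : 2 ≤ d) : Fin d → ℂ := fun i =>
  if i = wi0 hd then 1 else if i = wi1 hd then Complex.I else 0

lemma wi_ne {d : ℕ} (hd : 2 ≤ d) : wi0 hd ≠ wi1 hd := by
  intro h
  have := congrArg Fin.val h
  simp [wi0, wi1] at this

lemma sum_pair {d : ℕ} (hd : 2 ≤ d) (f : Fin d → ℂ) (A B : ℂ)
    (hf : ∀ i, f i = if i = wi0 hd then A else if i = wi1 hd then B else 0) :
    ∑ i, f i = A + B := by
  have h : ∀ i, f i = (if i = wi0 hd then A else 0) + (if i = wi1 hd then B else 0) := by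
    intro i
    rw [hf i]
    by_cases h0 : i = wi0 hd
    · subst h0; simp [(wi_ne hd)]
    · by_cases h1 : i = wi1 hd <;> simp [h0, h1, (wi_ne hd).symm]
  rw [Finset.sum_congr rfl fun i _ => h i, Finset.sum_add_distrib,
    Finset.sum_ite_eq' _ (wi0 hd), Finset.sum_ite_eq' _ (wi1 hd)]
  simp

lemma wv_F1 {d : ℕ} (hd : 2 ≤ d) : ∑ i, wv hd i * star (wv hd i) = 2 := by
  rw [sum_pair hd _ 1 1 (fun i => by
    by_cases h0 : i = wi0 hd <;> by_cases h1 : i = wi1 hd <;>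
      simp [wv, h0, h1, (wi_ne hd).symm, Complex.star_def, Complex.conj_I, Complex.I_mul_I])]
  norm_num

lemma wv_F2 {d : ℕ} (hd : 2 ≤ d) : ∑ i, star (wv hd i) * wv hd i = 2 := by
  rw [sum_pair hd _ 1 1 (fun i => by
    by_cases h0 : i = wi0 hd <;> by_cases h1 : i = wi1 hd <;>
      simp [wv, h0, h1, (wi_ne hd).symm, Complex.star_def, Complex.conj_I, Complex.I_mul_I])]
  norm_num

lemma wv_F4 {d : ℕ} (hd : 2 ≤ d) : ∑ i, star (wv hd i) * star (wv hd i) = 0 := by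
  rw [sum_pair hd _ 1 (-1) (fun i => by
    by_cases h0 : i = wi0 hd <;> by_cases h1 : i = wi1 hd <;>
      simp [wv, h0, h1, (wi_ne hd).symm, Complex.star_def, Complex.conj_I, Complex.I_mul_I])]
  norm_num

def wρ {d : ℕ} (hd : 2 ≤ d) : Matrix (Fin d) (Fin d) ℂ :=
  Matrix.of fun i j => (1 / 2 : ℂ) * (wv hd i * star (wv hd j))

lemma wρ_psd {d : ℕ} (hd : 2 ≤ d) : (wρ hd).PosSemidef := by
  have h : wρ hd = (Matrix.of fun i j => if j = wi0 hd then ((Real.sqrt (1/2) : ℝ) : ℂ) * wv hd i else 0)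
      * (Matrix.of fun i j => if j = wi0 hd then ((Real.sqrt (1/2) : ℝ) : ℂ) * wv hd i else 0)ᴴ := by
    ext i j
    rw [Matrix.mul_apply]
    have : ∀ k, (Matrix.of fun i j => if j = wi0 hd then ((Real.sqrt (1/2) : ℝ) : ℂ) * wv hd i else 0) i k
        * (Matrix.of fun i j => if j = wi0 hd then ((Real.sqrt (1/2) : ℝ) : ℂ) * wv hd i else 0)ᴴ k j
        = if k = wi0 hd then (((Real.sqrt (1/2) : ℝ) : ℂ) * wv hd i)
            * star (((Real.sqrt (1/2) : ℝ) : ℂ) * wv hd j) else 0 := by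
      intro k
      by_cases hk : k = wi0 hd <;> simp [hk, Matrix.conjTranspose_apply]
    rw [Finset.sum_congr rfl fun k _ => this k, Finset.sum_ite_eq' _ (wi0 hd)]
    have hc : ((Real.sqrt (1/2) : ℝ) : ℂ) * star ((Real.sqrt (1/2) : ℝ) : ℂ) = 1 / 2 := by
      rw [Complex.star_def, Complex.conj_ofReal, ← Complex.ofReal_mul,
        Real.mul_self_sqrt (by norm_num)]
      norm_num
    simp only [Finset.mem_univ, if_true, star_mul', wρ, Matrix.of_apply]
    rw [← hc]
    ring
  rw [h]
  exact posSemidef_self_mul_conjTranspose _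

lemma wρ_trace {d : ℕ} (hd : 2 ≤ d) : (wρ hd).trace = 1 := by
  have : (wρ hd).trace = (1/2 : ℂ) * ∑ i, wv hd i * star (wv hd i) := by
    rw [Matrix.trace, Finset.mul_sum]
    exact Finset.sum_congr rfl fun i _ => rfl
  rw [this, wv_F1]
  norm_num

lemma wρ_sq {d : ℕ} (hd : 2 ≤ d) : wρ hd * wρ hd = wρ hd := by
  ext i j
  rw [Matrix.mul_apply]
  have : ∀ k, wρ hd i k * wρ hd k j
      = ((1/4 : ℂ) * (wv hd i * star (wv hd j))) * (star (wv hd k) * wv hd k) := by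
    intro k
    show ((1/2 : ℂ) * (wv hd i * star (wv hd k))) * ((1/2 : ℂ) * (wv hd k * star (wv hd j))) = _
    ring
  rw [Finset.sum_congr rfl fun k _ => this k, ← Finset.mul_sum, wv_F2]
  show _ = (1/2 : ℂ) * (wv hd i * star (wv hd j))
  ring

lemma wρ_Q {d : ℕ} (hd : 2 ≤ d) : (wρ hd * (wρ hd)ᵀ).trace = 0 := by
  have key : ∀ i, (wρ hd * (wρ hd)ᵀ) i i
      = ((1/4 : ℂ) * (wv hd i * wv hd i)) * ∑ k, star (wv hd k) * star (wv hd k) := by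
    intro i
    rw [Matrix.mul_apply, Finset.mul_sum]
    refine Finset.sum_congr rfl fun k _ => ?_
    show ((1/2 : ℂ) * (wv hd i * star (wv hd k))) * ((1/2 : ℂ) * (wv hd i * star (wv hd k))) = _
    ring
  simp only [Matrix.trace, Matrix.diag_apply]
  rw [Finset.sum_congr rfl fun i _ => key i, wv_F4 hd]
  simp

end WHaux

/-- For `d ≥ 2` and `ab ≤ 0`, if the generalized Werner-Holevo map
`Λ_{a,b}` is completely positive then its maximal purity output is
`(d(a²+b²) − (a+b)² + 1)/d`, and its minimal Renyi-2 entropy output is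
`−log((d(a²+b²) − (a+b)² + 1)/d)`. -/
theorem WH_maxPurity_of_ab_nonpos {d : ℕ} (hd : 2 ≤ d) (a b : ℝ) (hab : a * b ≤ 0)
    (hCP : (WHchoi d a b).PosSemidef) :
    sSup {x : ℝ | ∃ ρ : Matrix (Fin d) (Fin d) ℂ, IsDensity ρ ∧
        x = purity (WHmap d a b ρ)}
      = ((d : ℝ) * (a ^ 2 + b ^ 2) - (a + b) ^ 2 + 1) / d
    ∧ sInf {x : ℝ | ∃ ρ : Matrix (Fin d) (Fin d) ℂ, IsDensity ρ ∧
        x = -Real.log (purity (WHmap d a b ρ))}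
      = -Real.log (((d : ℝ) * (a ^ 2 + b ^ 2) - (a + b) ^ 2 + 1) / d) := by
  classical
  have hd0 : 0 < d := by omega
  have hdR : (0 : ℝ) < (d : ℝ) := by exact_mod_cast hd0
  set M : ℝ := ((d : ℝ) * (a ^ 2 + b ^ 2) - (a + b) ^ 2 + 1) / d with hM
  have hMalt : M = (a ^ 2 + b ^ 2) + (1 - (a + b) ^ 2) / d := by
    rw [hM]; field_simp; ring
  -- the witness
  have hwdens : IsDensity (WHaux.wρ hd) := ⟨WHaux.wρ_psd hd, WHaux.wρ_trace hd⟩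
  have hwpur : purity (WHmap d a b (WHaux.wρ hd)) = M := by
    rw [WHaux.WH_purity hd0 a b (WHaux.wρ_trace hd), WHaux.wρ_sq hd, WHaux.wρ_trace hd,
      WHaux.wρ_Q hd, hMalt]
    simp
  -- the upper bound
  have hub : ∀ ρ : Matrix (Fin d) (Fin d) ℂ, IsDensity ρ → purity (WHmap d a b ρ) ≤ M := by
    intro ρ ⟨hρ, ht⟩
    rw [WHaux.WH_purity hd0 a b ht, hMalt]
    have hT : ((ρ * ρ).trace).re ≤ 1 := WHaux.density_trace_sq_le_one hρ ht
    have hT0 : 0 ≤ ((ρ * ρ).trace).re := WHaux.trace_mul_psd_re_nonneg hρ hρ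
    have hQ : 0 ≤ ((ρ * ρᵀ).trace).re := WHaux.trace_mul_psd_re_nonneg hρ hρ.transpose
    nlinarith [sq_nonneg (a + b), sq_nonneg (a - b)]
  -- positivity
  have hpos : ∀ ρ : Matrix (Fin d) (Fin d) ℂ, IsDensity ρ → 0 < purity (WHmap d a b ρ) := by
    intro ρ ⟨hρ, ht⟩
    exact WHaux.trace_sq_pos (WHaux.WH_herm a b hρ) (WHaux.WH_trace_eq hd0 a b ht)
  have hMpos : 0 < M := hwpur ▸ hpos _ hwdens
  set S := {x : ℝ | ∃ ρ : Matrix (Fin d) (Fin d) ℂ, IsDensity ρ ∧ x = purity (WHmap d a b ρ)}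
  have hMS : M ∈ S := ⟨WHaux.wρ hd, hwdens, hwpur.symm⟩
  have hSub : ∀ x ∈ S, x ≤ M := by rintro x ⟨ρ, hρ, rfl⟩; exact hub ρ hρ
  constructor
  · exact le_antisymm (csSup_le ⟨M, hMS⟩ hSub) (le_csSup ⟨M, hSub⟩ hMS)
  · set T := {x : ℝ | ∃ ρ : Matrix (Fin d) (Fin d) ℂ, IsDensity ρ ∧
        x = -Real.log (purity (WHmap d a b ρ))}
    have hMT : -Real.log M ∈ T := ⟨WHaux.wρ hd, hwdens, by rw [hwpur]⟩
    have hTlb : ∀ x ∈ T, -Real.log M ≤ x := by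
      rintro x ⟨ρ, hρ, rfl⟩
      exact neg_le_neg (Real.log_le_log (hpos ρ hρ) (hub ρ hρ))
    exact le_antisymm (csInf_le ⟨-Real.log M, hTlb⟩ hMT) (le_csInf ⟨_, hMT⟩ hTlb)
end
end
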